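/- Let F ∈ C²(ℝ) with F' of polynomial growth and define the entropy flux difference F^{β_ε} as above. Then there exist C > 0 and p ∈ ℕ such that for all a, b ∈ ℝ: |F^{β_ε}(a,b) − F^{β_ε}(b,a)| ≤ C ε (1 + |a|^p + |b|^p). -/

import Mathlib

/-!
Write `φ = β'`, so that `β_ε'(r) = φ (r / ε)`, and let `b ≤ a`. After flipping the second integral
the defect is `∫_b^a (φ((σ-b)/ε) + φ((σ-a)/ε)) F'(σ) dσ`. Split the integrand as
`(φ((σ-b)/ε) - 1) F'(σ) + (φ((σ-a)/ε) + 1) F'(σ)`: since `φ = 1` on `[1, ∞)` and `φ = -1` on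
`(-∞, -1]`, the first term lives on `[b, b + ε]` and the second on `[a - ε, a]`, and both are bounded
by `2 sup_{[b,a]} |F'|`. Hence the defect is at most `4 ε sup_{[b,a]} |F'|`, and the polynomial
growth of `F'` bounds the supremum by `|C₀| (1 + |a|^p₀ + |b|^p₀)`.
-/

open Set intervalIntegral

/-- `entropyFlux (deriv β) (deriv F) ε a b` is the paper's `F^{β_ε}(a,b)`. -/
noncomputable def entropyFlux (φ G : ℝ → ℝ) (ε a b : ℝ) : ℝ :=
  ∫ σ in b..a, φ ((σ - b) / ε) * G σ

lemma deriv_const_mul_comp_div (β : ℝ → ℝ) {ε : ℝ} (hε : ε ≠ 0) (x : ℝ) :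
    deriv (fun s : ℝ => ε * β (s / ε)) x = deriv β (x / ε) := by
  simp_rw [div_eq_inv_mul]
  rw [deriv_const_mul_field, deriv_comp_mul_left, smul_eq_mul, ← mul_assoc,
    mul_inv_cancel₀ hε, one_mul]

lemma abs_le_one_of_eq_sign_outside {φ : ℝ → ℝ} (hneg : ∀ r, r ≤ -1 → φ r = -1)
    (hpos : ∀ r, 1 ≤ r → φ r = 1) (hmid : ∀ r, |r| ≤ 1 → |φ r| ≤ 1) (r : ℝ) : |φ r| ≤ 1 := by
  rcases le_or_gt r (-1) with h | h
  · simp [hneg r h]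
  rcases le_or_gt 1 r with h' | h'
  · simp [hpos r h']
  exact hmid r (abs_le.2 ⟨h.le, h'.le⟩)

lemma pow_abs_le_add_of_mem_uIcc {a b σ : ℝ} (hσ : σ ∈ uIcc a b) (p : ℕ) :
    |σ| ^ p ≤ |a| ^ p + |b| ^ p := by
  have hmax : |σ| ≤ max |a| |b| := by
    rcases le_total a b with h | h
    · rw [uIcc_of_le h] at hσ; exact abs_le_max_abs_abs hσ.1 hσ.2
    · rw [uIcc_of_ge h] at hσ; exact max_comm |a| |b| ▸ abs_le_max_abs_abs hσ.1 hσ.2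
  calc |σ| ^ p ≤ max |a| |b| ^ p := pow_le_pow_left₀ (abs_nonneg σ) hmax p
    _ ≤ |a| ^ p + |b| ^ p := by
      rcases max_choice |a| |b| with h | h <;> rw [h] <;> simp [pow_nonneg]

lemma abs_intervalIntegral_le_of_eq_zero_of_add_le {f : ℝ → ℝ} {a b ε K : ℝ}
    (hf : IntervalIntegrable f MeasureTheory.volume b a) (hba : b ≤ a) (hε : 0 ≤ ε)
    (hK : ∀ σ ∈ Icc b a, |f σ| ≤ K) (hzero : ∀ σ ∈ Icc (b + ε) a, f σ = 0) :
    |∫ σ in b..a, f σ| ≤ K * ε := by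
  have hK0 : 0 ≤ K := (abs_nonneg _).trans (hK b ⟨le_rfl, hba⟩)
  have hbound : ∀ c ∈ Icc b a, |∫ σ in b..c, f σ| ≤ K * (c - b) := fun c hc => by
    have h := norm_integral_le_of_norm_le_const (a := b) (b := c) (f := f) (C := K)
      fun σ hσ => hK σ <| Icc_subset_Icc le_rfl hc.2 <| by
        rw [← uIcc_of_le hc.1]; exact uIoc_subset_uIcc hσ
    rwa [Real.norm_eq_abs, abs_of_nonneg (sub_nonneg.2 hc.1)] at h
  rcases le_or_gt a (b + ε) with hshort | hlong
  · calc |∫ σ in b..a, f σ| ≤ K * (a - b) := hbound a ⟨hba, le_rfl⟩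
      _ ≤ K * ε := by gcongr; linarith
  have hsub : ∀ c ∈ Icc b a, uIcc b c ⊆ uIcc b a ∧ uIcc c a ⊆ uIcc b a := fun c hc =>
    ⟨uIcc_subset_uIcc left_mem_uIcc (by rwa [uIcc_of_le hba]),
      uIcc_subset_uIcc (by rwa [uIcc_of_le hba]) right_mem_uIcc⟩
  have hmem : b + ε ∈ Icc b a := ⟨by linarith, hlong.le⟩
  have htail : ∫ σ in (b + ε)..a, f σ = 0 := by
    rw [integral_congr (g := fun _ => (0 : ℝ)) (fun σ hσ => hzero σ (uIcc_of_le hlong.le ▸ hσ)),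
      integral_zero]
  rw [← integral_add_adjacent_intervals (hf.mono_set (hsub _ hmem).1)
    (hf.mono_set (hsub _ hmem).2), htail, add_zero]
  simpa using hbound (b + ε) hmem

lemma abs_intervalIntegral_le_of_eq_zero_of_le_sub {f : ℝ → ℝ} {a b ε K : ℝ}
    (hf : IntervalIntegrable f MeasureTheory.volume b a) (hba : b ≤ a) (hε : 0 ≤ ε)
    (hK : ∀ σ ∈ Icc b a, |f σ| ≤ K) (hzero : ∀ σ ∈ Icc b (a - ε), f σ = 0) :
    |∫ σ in b..a, f σ| ≤ K * ε := by
  have hreflect : ∫ σ in -a..-b, f (-σ) = ∫ σ in b..a, f σ := by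
    rw [integral_comp_neg, neg_neg, neg_neg]
  rw [← hreflect]
  refine abs_intervalIntegral_le_of_eq_zero_of_add_le
    (by simpa using (IntervalIntegrable.iff_comp_neg (f := f)).1 hf.symm) (neg_le_neg hba) hε
    (fun σ hσ => hK (-σ) ⟨le_neg.2 hσ.2, neg_le.1 hσ.1⟩)
    (fun σ hσ => hzero (-σ) ⟨le_neg.2 hσ.2, by linarith [hσ.1]⟩)

lemma abs_entropyFlux_sub_swap_le_of_le {φ G : ℝ → ℝ} (hφ : Continuous φ) (hG : Continuous G)
    (hneg : ∀ r, r ≤ -1 → φ r = -1) (hpos : ∀ r, 1 ≤ r → φ r = 1) (hbdd : ∀ r, |φ r| ≤ 1)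
    {ε a b M : ℝ} (hε : 0 < ε) (hba : b ≤ a) (hM : ∀ σ ∈ Icc b a, |G σ| ≤ M) :
    |entropyFlux φ G ε a b - entropyFlux φ G ε b a| ≤ 4 * M * ε := by
  have hint : ∀ c y : ℝ, IntervalIntegrable (fun σ => (φ ((σ - c) / ε) + y) * G σ)
      MeasureTheory.volume b a := fun c y => by
    apply Continuous.intervalIntegrable; fun_prop
  have hint₀ : ∀ c : ℝ, IntervalIntegrable (fun σ => φ ((σ - c) / ε) * G σ)
      MeasureTheory.volume b a := fun c => by
    apply Continuous.intervalIntegrable; fun_prop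
  have hsplit : entropyFlux φ G ε a b - entropyFlux φ G ε b a
      = (∫ σ in b..a, (φ ((σ - b) / ε) + -1) * G σ)
        + ∫ σ in b..a, (φ ((σ - a) / ε) + 1) * G σ := by
    rw [entropyFlux, entropyFlux, integral_symm b a, sub_neg_eq_add,
      ← integral_add (hint₀ b) (hint₀ a), ← integral_add (hint b (-1)) (hint a 1)]
    congr 1; ext σ; ring
  have hterm : ∀ (r c : ℝ), |c| ≤ 1 → ∀ σ ∈ Icc b a, |(φ r + c) * G σ| ≤ 2 * M :=
    fun r c hc σ hσ => by
      rw [abs_mul]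
      refine mul_le_mul ?_ (hM σ hσ) (abs_nonneg _) zero_le_two
      linarith [abs_add_le (φ r) c, hbdd r]
  rw [hsplit]
  calc _ ≤ |∫ σ in b..a, (φ ((σ - b) / ε) + -1) * G σ|
        + |∫ σ in b..a, (φ ((σ - a) / ε) + 1) * G σ| := abs_add_le _ _
    _ ≤ 2 * M * ε + 2 * M * ε := by
      gcongr
      · refine abs_intervalIntegral_le_of_eq_zero_of_add_le (hint b (-1)) hba hε.le
          (fun σ hσ => hterm _ (-1) (by norm_num) σ hσ) fun σ hσ => ?_
        rw [hpos _ ((one_le_div hε).2 (by linarith [hσ.1]))]; ring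
      · refine abs_intervalIntegral_le_of_eq_zero_of_le_sub (hint a 1) hba hε.le
          (fun σ hσ => hterm _ 1 (by norm_num) σ hσ) fun σ hσ => ?_
        rw [hneg _ ((div_le_iff₀ hε).2 (by linarith [hσ.2]))]; ring
    _ = 4 * M * ε := by ring

lemma abs_entropyFlux_sub_swap_le {φ G : ℝ → ℝ} (hφ : Continuous φ) (hG : Continuous G)
    (hneg : ∀ r, r ≤ -1 → φ r = -1) (hpos : ∀ r, 1 ≤ r → φ r = 1) (hbdd : ∀ r, |φ r| ≤ 1)
    {ε M : ℝ} (hε : 0 < ε) (a b : ℝ) (hM : ∀ σ ∈ uIcc a b, |G σ| ≤ M) :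
    |entropyFlux φ G ε a b - entropyFlux φ G ε b a| ≤ 4 * M * ε := by
  rcases le_total b a with hba | hab
  · exact abs_entropyFlux_sub_swap_le_of_le hφ hG hneg hpos hbdd hε hba
      fun σ hσ => hM σ (uIcc_of_ge hba ▸ hσ)
  · rw [abs_sub_comm]
    exact abs_entropyFlux_sub_swap_le_of_le hφ hG hneg hpos hbdd hε hab
      fun σ hσ => hM σ (uIcc_of_le hab ▸ hσ)

theorem stmt3_general (β : ℝ → ℝ)
    (hβC2 : ContDiff ℝ 2 β)
    (hdneg : ∀ r : ℝ, r ≤ -1 → deriv β r = -1)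
    (hdpos : ∀ r : ℝ, 1 ≤ r → deriv β r = 1)
    (hdmid : ∀ r : ℝ, |r| ≤ 1 → |deriv β r| ≤ 1)
    (F : ℝ → ℝ) (hF : ContDiff ℝ 2 F)
    (C₀ : ℝ) (p₀ : ℕ) (hF' : ∀ r : ℝ, |deriv F r| ≤ C₀ * (1 + |r| ^ p₀)) :
    ∃ (C : ℝ) (p : ℕ), 0 < C ∧ ∀ ε : ℝ, 0 < ε → ∀ a b : ℝ,
      |(∫ σ in b..a, deriv (fun s : ℝ => ε * β (s / ε)) (σ - b) * deriv F σ)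
          - (∫ σ in a..b, deriv (fun s : ℝ => ε * β (s / ε)) (σ - a) * deriv F σ)|
        ≤ C * ε * (1 + |a| ^ p + |b| ^ p) := by
  refine ⟨4 * |C₀| + 1, p₀, by positivity, fun ε hε a b => ?_⟩
  simp only [deriv_const_mul_comp_div β hε.ne']
  have hgrowth : ∀ σ ∈ uIcc a b, |deriv F σ| ≤ |C₀| * (1 + |a| ^ p₀ + |b| ^ p₀) := fun σ hσ =>
    calc |deriv F σ| ≤ C₀ * (1 + |σ| ^ p₀) := hF' σ
      _ ≤ |C₀| * (1 + |σ| ^ p₀) := by gcongr; exact le_abs_self C₀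
      _ ≤ |C₀| * (1 + |a| ^ p₀ + |b| ^ p₀) := by
        rw [add_assoc]; gcongr; exact pow_abs_le_add_of_mem_uIcc hσ p₀
  calc _ ≤ 4 * (|C₀| * (1 + |a| ^ p₀ + |b| ^ p₀)) * ε :=
        abs_entropyFlux_sub_swap_le (hβC2.continuous_deriv one_le_two)
          (hF.continuous_deriv one_le_two) hdneg hdpos
          (abs_le_one_of_eq_sign_outside hdneg hdpos hdmid) hε a b hgrowth
    _ ≤ (4 * |C₀| + 1) * ε * (1 + |a| ^ p₀ + |b| ^ p₀) := by
      rw [← mul_assoc, mul_right_comm]; gcongr; linarith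

/-- For the smooth convex approximation `β_ε (r) = ε β (r/ε)` of the absolute value and a
`C²` flux `F` with `F'` of polynomial growth, the entropy flux
`F^{β_ε}(a,b) = ∫_b^a β_ε'(σ - b) F'(σ) dσ` is almost symmetric:
`|F^{β_ε}(a,b) − F^{β_ε}(b,a)| ≤ C ε (1 + |a|^p + |b|^p)`. -/
theorem stmt3 (β : ℝ → ℝ)
    (hβC2 : ContDiff ℝ 2 β)
    (hβnn : ∀ r, 0 ≤ β r)
    (hβconv : ConvexOn ℝ Set.univ β)
    (hβ0 : β 0 = 0)
    (hβeven : ∀ r, β (-r) = β r)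
    (hdneg : ∀ r : ℝ, r ≤ -1 → deriv β r = -1)
    (hdpos : ∀ r : ℝ, 1 ≤ r → deriv β r = 1)
    (hdmid : ∀ r : ℝ, |r| ≤ 1 → |deriv β r| ≤ 1)
    (F : ℝ → ℝ) (hF : ContDiff ℝ 2 F)
    (C₀ : ℝ) (p₀ : ℕ) (hF' : ∀ r : ℝ, |deriv F r| ≤ C₀ * (1 + |r| ^ p₀)) :
    ∃ (C : ℝ) (p : ℕ), 0 < C ∧ ∀ ε : ℝ, 0 < ε → ∀ a b : ℝ,
      |(∫ σ in b..a, deriv (fun s : ℝ => ε * β (s / ε)) (σ - b) * deriv F σ)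
          - (∫ σ in a..b, deriv (fun s : ℝ => ε * β (s / ε)) (σ - a) * deriv F σ)|
        ≤ C * ε * (1 + |a| ^ p + |b| ^ p) :=
  stmt3_general β hβC2 hdneg hdpos hdmid F hF C₀ p₀ hF'
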